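/- arXiv:math/0206008 — 3 statements merged into one kernel-verified Lean document; each statement's English description precedes it below -/
import Mathlib

section
/- Let k be a field, let n ≥ 1 and r ≥ 1 be integers, let ζ ∈ k be a primitive r-th root of unity, fix j₀ ∈ {1,…,n}, write A = k[X₁,…,Xₙ], and let σ be the k-algebra automorphism of A with σ(X_i) = X_i for i ≠ j₀ and σ(X_{j₀}) = ζ·X_{j₀}. Let Ω = Ω_{A/k} be the module of Kähler differentials of A over k with universal derivation d : A → Ω, and let σ_* : Ω → Ω be the additive map induced functorially by σ (so that σ_*(f · d g) = σ(f) · d(σ(g)) for f, g ∈ A). Then for ω ∈ Ω one has σ_*(ω) = ω if and only if there exist polynomials b₁,…,bₙ ∈ A with σ(b_i) = b_i for all i such that ω = Σ_{i ≠ j₀} b_i · d(X_i) + b_{j₀} · d(X_{j₀}^r). -/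
/-!
In the basis `d X₁, …, d Xₙ` of `Ω`, the map `σ_*` acts on the coefficient `aᵢ` of `d Xᵢ` by `σ`,
except that the coefficient of `d X_{j₀}` is also multiplied by `ζ`. So a form is invariant iff
its coefficients `aᵢ` (`i ≠ j₀`) are invariant and `ζ σ(a_{j₀}) = a_{j₀}`. Comparing coefficients
of monomials, the latter forces every exponent `e` of `X_{j₀}` occurring in `a_{j₀}` to satisfy
`ζ^(e+1) = 1`, i.e. `e ≡ -1 mod r`; hence `a_{j₀} = X_{j₀}^(r-1) c` with `c` invariant, and
`a_{j₀} d X_{j₀} = (c / r) d(X_{j₀}^r)`.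
-/

open MvPolynomial

namespace MvPolynomial

variable {R ι F : Type*}

section CommSemiring

variable [CommSemiring R] [FunLike F (MvPolynomial ι R) (MvPolynomial ι R)]
  [AlgHomClass F R (MvPolynomial ι R) (MvPolynomial ι R)]

theorem coeff_apply_of_scales_X {φ : F} {j : ι} {ζ : R}
    (hφ : ∀ i, i ≠ j → φ (X i) = X i) (hφj : φ (X j) = C ζ * X j)
    (p : MvPolynomial ι R) (m : ι →₀ ℕ) :
    coeff m (φ p) = ζ ^ m j * coeff m p := by
  classical
  induction p using MvPolynomial.induction_on generalizing m with
  | C a =>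
    rw [← algebraMap_eq, AlgHomClass.commutes, algebraMap_eq]
    rcases eq_or_ne m 0 with rfl | hm
    · simp
    · simp [coeff_C, Ne.symm hm]
  | add p q hp hq => simp only [map_add, coeff_add, hp, hq, mul_add]
  | mul_X p i ih =>
    rcases eq_or_ne i j with rfl | hi
    · rw [map_mul, hφj, mul_left_comm, coeff_C_mul, coeff_mul_X', coeff_mul_X']
      split_ifs with hm
      · have : 1 ≤ m i := Nat.one_le_iff_ne_zero.2 (Finsupp.mem_support_iff.1 hm)
        rw [ih, Finsupp.tsub_apply, Finsupp.single_eq_same, ← mul_assoc, ← pow_succ',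
          Nat.sub_add_cancel this]
      · simp
    · rw [map_mul, hφ i hi, coeff_mul_X', coeff_mul_X']
      split_ifs
      · rw [ih, Finsupp.tsub_apply, Finsupp.single_eq_of_ne hi.symm, Nat.sub_zero]
      · simp

theorem X_pow_dvd_of_le_of_mem_support {p : MvPolynomial ι R} {j : ι} {e : ℕ}
    (h : ∀ m ∈ p.support, e ≤ m j) : X j ^ e ∣ p := by
  rw [X_pow_eq_monomial, monomial_one_dvd_iff_modMonomial_eq_zero]
  ext m
  by_cases hm : Finsupp.single j e ≤ m
  · simp [hm]
  · rw [coeff_modMonomial_of_not_le _ hm, coeff_zero, ← notMem_support_iff]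
    exact fun hp => hm (Finsupp.single_le_iff.2 (h m hp))

theorem apply_X_pow_of_scales_X {φ : F} {j : ι} {ζ : R} {r : ℕ}
    (hφj : φ (X j) = C ζ * X j) (hζ : ζ ^ r = 1) : φ (X j ^ r) = X j ^ r := by
  rw [map_pow, hφj, mul_pow, ← C_pow, hζ, C_1, one_mul]

end CommSemiring

section CommRing

variable [CommRing R] [IsDomain R] [FunLike F (MvPolynomial ι R) (MvPolynomial ι R)]
  [AlgHomClass F R (MvPolynomial ι R) (MvPolynomial ι R)]

theorem X_pow_pred_dvd_of_C_mul_apply_eq {φ : F} {j : ι} {ζ : R} {r : ℕ}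
    (hr : 0 < r) (hζ : IsPrimitiveRoot ζ r)
    (hφ : ∀ i, i ≠ j → φ (X i) = X i) (hφj : φ (X j) = C ζ * X j)
    {a : MvPolynomial ι R} (ha : C ζ * φ a = a) : X j ^ (r - 1) ∣ a := by
  refine X_pow_dvd_of_le_of_mem_support fun m hm => ?_
  have hcoeff := congrArg (coeff m) ha
  rw [coeff_C_mul, coeff_apply_of_scales_X hφ hφj, ← mul_assoc, ← pow_succ'] at hcoeff
  have hpow : ζ ^ (m j + 1) = 1 :=
    mul_right_cancel₀ (mem_support_iff.1 hm) (hcoeff.trans (one_mul _).symm)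
  have := Nat.le_of_dvd (Nat.succ_pos _) ((hζ.pow_eq_one_iff_dvd _).1 hpow)
  omega

theorem exists_eq_X_pow_pred_mul_of_C_mul_apply_eq {φ : F} {j : ι} {ζ : R}
    {r : ℕ} (hr : 0 < r) (hζ : IsPrimitiveRoot ζ r)
    (hφ : ∀ i, i ≠ j → φ (X i) = X i) (hφj : φ (X j) = C ζ * X j)
    {a : MvPolynomial ι R} (ha : C ζ * φ a = a) :
    ∃ c, a = X j ^ (r - 1) * c ∧ φ c = c := by
  obtain ⟨c, rfl⟩ := X_pow_pred_dvd_of_C_mul_apply_eq hr hζ hφ hφj ha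
  refine ⟨c, rfl, mul_left_cancel₀ (pow_ne_zero r (X_ne_zero j)) ?_⟩
  have hXr : X j * X j ^ (r - 1) = (X j ^ r : MvPolynomial ι R) := by
    rw [← pow_succ', Nat.sub_add_cancel hr]
  calc X j ^ r * φ c = φ (X j ^ r * c) := by
        rw [map_mul, apply_X_pow_of_scales_X hφj hζ.pow_eq_one]
    _ = X j * (C ζ * φ (X j ^ (r - 1) * c)) := by
        rw [← hXr, mul_assoc, map_mul, hφj]; ring
    _ = X j ^ r * c := by rw [ha, ← mul_assoc, hXr]

end CommRing

end MvPolynomial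

namespace KaehlerDifferential

variable {R ι : Type*} [CommRing R]

local notation "d" => D R (MvPolynomial ι R)

theorem mvPolynomialBasis_equivFun_symm_apply [Fintype ι] (a : ι → MvPolynomial ι R) :
    (mvPolynomialBasis R ι).equivFun.symm a = ∑ i, a i • d (X i) := by
  simp [Module.Basis.equivFun_symm_apply, mvPolynomialBasis_apply]

theorem D_C_mul (c : R) (p : MvPolynomial ι R) :
    d (C c * p) = (C c : MvPolynomial ι R) • d p := by
  rw [C_mul', Derivation.map_smul, ← algebraMap_smul (MvPolynomial ι R), algebraMap_eq]

theorem map_sum_smul_D_X_of_scales_X {F : Type*} [Fintype ι] [DecidableEq ι]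
    [FunLike F (MvPolynomial ι R) (MvPolynomial ι R)]
    [AlgHomClass F R (MvPolynomial ι R) (MvPolynomial ι R)] {φ : F} {j : ι} {ζ : R}
    (hφ : ∀ i, i ≠ j → φ (X i) = X i) (hφj : φ (X j) = C ζ * X j)
    (φstar : Ω[MvPolynomial ι R⁄R] →+ Ω[MvPolynomial ι R⁄R])
    (hφstar : ∀ f g, φstar (f • d g) = φ f • d (φ g)) (a : ι → MvPolynomial ι R) :
    φstar (∑ i, a i • d (X i)) =
      ∑ i, Function.update (fun i => φ (a i)) j (C ζ * φ (a j)) i • d (X i) := by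
  rw [map_sum]
  refine Finset.sum_congr rfl fun i _ => ?_
  rw [hφstar]
  rcases eq_or_ne i j with rfl | hi
  · rw [hφj, D_C_mul, smul_smul, Function.update_self, mul_comm]
  · rw [hφ i hi, Function.update_of_ne hi]

theorem map_sum_smul_D_X_eq_self_iff_of_scales_X {F : Type*} [Fintype ι]
    [FunLike F (MvPolynomial ι R) (MvPolynomial ι R)]
    [AlgHomClass F R (MvPolynomial ι R) (MvPolynomial ι R)] {φ : F} {j : ι} {ζ : R}
    (hφ : ∀ i, i ≠ j → φ (X i) = X i) (hφj : φ (X j) = C ζ * X j)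
    (φstar : Ω[MvPolynomial ι R⁄R] →+ Ω[MvPolynomial ι R⁄R])
    (hφstar : ∀ f g, φstar (f • d g) = φ f • d (φ g)) (a : ι → MvPolynomial ι R) :
    φstar (∑ i, a i • d (X i)) = ∑ i, a i • d (X i) ↔
      C ζ * φ (a j) = a j ∧ ∀ i, i ≠ j → φ (a i) = a i := by
  classical
  rw [map_sum_smul_D_X_of_scales_X hφ hφj φstar hφstar, ← mvPolynomialBasis_equivFun_symm_apply,
    ← mvPolynomialBasis_equivFun_symm_apply, (LinearEquiv.injective _).eq_iff,
    Function.update_eq_iff]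

theorem C_inv_mul_smul_D_X_pow {k : Type*} [Field k] {r : ℕ} (hr : (r : k) ≠ 0) (j : ι)
    (c : MvPolynomial ι k) :
    (C (r : k)⁻¹ * c) • D k (MvPolynomial ι k) (X j ^ r) =
      (X j ^ (r - 1) * c) • D k (MvPolynomial ι k) (X j) := by
  have hr' : C (r : k)⁻¹ * (r : MvPolynomial ι k) = 1 := by
    rw [← map_natCast (C : k →+* MvPolynomial ι k), ← C_mul, inv_mul_cancel₀ hr, C_1]
  rw [Derivation.leibniz_pow, ← Nat.cast_smul_eq_nsmul (MvPolynomial ι k), smul_smul, smul_smul,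
    mul_right_comm _ c, hr', one_mul, mul_comm]

end KaehlerDifferential

open KaehlerDifferential

theorem stmt7_general {k : Type*} [Field k] (n r : ℕ) (hr : 1 ≤ r)
    (ζ : k) (hζ : IsPrimitiveRoot ζ r) (j₀ : Fin n)
    (σ : MvPolynomial (Fin n) k ≃ₐ[k] MvPolynomial (Fin n) k)
    (hσ : ∀ i : Fin n, i ≠ j₀ → σ (X i) = X i)
    (hσ' : σ (X j₀) = C ζ * X j₀)
    (σstar : KaehlerDifferential k (MvPolynomial (Fin n) k) →+
      KaehlerDifferential k (MvPolynomial (Fin n) k))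
    (hσstar : ∀ f g : MvPolynomial (Fin n) k,
      σstar (f • KaehlerDifferential.D k (MvPolynomial (Fin n) k) g) =
        σ f • KaehlerDifferential.D k (MvPolynomial (Fin n) k) (σ g))
    (ω : KaehlerDifferential k (MvPolynomial (Fin n) k)) :
    σstar ω = ω ↔
      ∃ b : Fin n → MvPolynomial (Fin n) k,
        (∀ i, σ (b i) = b i) ∧
        ω = (∑ i ∈ Finset.univ.erase j₀,
              b i • KaehlerDifferential.D k (MvPolynomial (Fin n) k) (X i)) +
            b j₀ • KaehlerDifferential.D k (MvPolynomial (Fin n) k) (X j₀ ^ r) := by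
  constructor
  · intro hinv
    obtain ⟨a, rfl⟩ := (mvPolynomialBasis k (Fin n)).equivFun.symm.surjective ω
    rw [mvPolynomialBasis_equivFun_symm_apply] at hinv ⊢
    obtain ⟨ha, hfix⟩ :=
      (map_sum_smul_D_X_eq_self_iff_of_scales_X hσ hσ' σstar hσstar a).1 hinv
    obtain ⟨c, hac, hc⟩ := exists_eq_X_pow_pred_mul_of_C_mul_apply_eq hr hζ hσ hσ' ha
    refine ⟨Function.update a j₀ (C (r : k)⁻¹ * c), fun i => ?_, ?_⟩
    · rcases eq_or_ne i j₀ with rfl | hi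
      · rw [Function.update_self, map_mul, hc, ← algebraMap_eq, AlgEquiv.commutes]
      · rw [Function.update_of_ne hi, hfix i hi]
    · have : NeZero r := ⟨by omega⟩
      rw [← Finset.sum_erase_add _ _ (Finset.mem_univ j₀), Function.update_self,
        C_inv_mul_smul_D_X_pow hζ.neZero'.out, ← hac]
      congr 1
      exact Finset.sum_congr rfl fun i hi => by
        rw [Function.update_of_ne (Finset.ne_of_mem_erase hi)]
  · rintro ⟨b, hb, rfl⟩
    rw [map_add, map_sum, hσstar, hb, apply_X_pow_of_scales_X hσ' hζ.pow_eq_one]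
    congr 1
    refine Finset.sum_congr rfl fun i hi => ?_
    rw [hσstar, hb, hσ i (Finset.ne_of_mem_erase hi)]

/-- Solomon's theorem for regular 1-forms in the étale-local
cyclic model; cf. Corollary 4.1.1.  Let `σ` be the `k`-algebra automorphism of
`A = k[X₁,…,Xₙ]` scaling `X_{j₀}` by a primitive `r`-th root of unity `ζ` and
fixing the other variables, let `Ω = Ω_{A/k}` with universal derivation `d`,
and let `σ_*` be the additive endomorphism of `Ω` induced functorially by `σ`
(so `σ_*(f · d g) = σ(f) · d(σ(g))`).  Then a 1-form `ω` is `σ_*`-invariant iff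
`ω = Σ_{i ≠ j₀} bᵢ · d Xᵢ + b_{j₀} · d(X_{j₀}^r)` with all `bᵢ`
`σ`-invariant polynomials. -/
theorem stmt7 {k : Type*} [Field k] (n r : ℕ) (hn : 1 ≤ n) (hr : 1 ≤ r)
    (ζ : k) (hζ : IsPrimitiveRoot ζ r) (j₀ : Fin n)
    (σ : MvPolynomial (Fin n) k ≃ₐ[k] MvPolynomial (Fin n) k)
    (hσ : ∀ i : Fin n, i ≠ j₀ → σ (X i) = X i)
    (hσ' : σ (X j₀) = C ζ * X j₀)
    (σstar : KaehlerDifferential k (MvPolynomial (Fin n) k) →+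
      KaehlerDifferential k (MvPolynomial (Fin n) k))
    (hσstar : ∀ f g : MvPolynomial (Fin n) k,
      σstar (f • KaehlerDifferential.D k (MvPolynomial (Fin n) k) g) =
        σ f • KaehlerDifferential.D k (MvPolynomial (Fin n) k) (σ g))
    (ω : KaehlerDifferential k (MvPolynomial (Fin n) k)) :
    σstar ω = ω ↔
      ∃ b : Fin n → MvPolynomial (Fin n) k,
        (∀ i, σ (b i) = b i) ∧
        ω = (∑ i ∈ Finset.univ.erase j₀,
              b i • KaehlerDifferential.D k (MvPolynomial (Fin n) k) (X i)) +
            b j₀ • KaehlerDifferential.D k (MvPolynomial (Fin n) k) (X j₀ ^ r) :=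
  stmt7_general n r hr ζ hζ j₀ σ hσ hσ' σstar hσstar ω
end

section
/- Let k be a field, let n ≥ 1 and r ≥ 1 be integers, let ζ ∈ k be a primitive r-th root of unity, fix j₀ ∈ {1,…,n}, write A = k[X₁,…,Xₙ] with fraction field L = Frac(A), and let Φ : L → L be the field homomorphism induced (via the universal property of the fraction field) by the injective k-algebra endomorphism of A sending X_i ↦ X_i for i ≠ j₀ and X_{j₀} ↦ X_{j₀}^r. Let p', q' be natural numbers and let θ ∈ L be nonzero. Then the following are equivalent: (i) Φ(θ) · ((r·1_k) · X_{j₀}^{r−1})^{q'−p'} lies in the image of A in L (the integer power q'−p' being taken in the field L); (ii) there exist an integer m and a polynomial g ∈ A not divisible by X_{j₀} such that θ = X_{j₀}^m · g in L and (r−1)(q'−p') + r·m ≥ 0. -/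
/-!
Write `t = X_{j₀}` and `s = (r - 1)(q' - p')`. Since `r` is a unit, (i) says that
`h = Φ(θ) t^s` is a polynomial. The substitution `σ : X_{j₀} ↦ ζ X_{j₀}` fixes every `ψ(a)`,
so its extension to the fraction field fixes the image of `Φ` and `σ(h) = ζ^s h`. As `ζ` is a
primitive `r`-th root of unity, every monomial of `h` then has `X_{j₀}`-degree `≡ s (mod r)`,
which means `h = t^j ψ(h')` with `0 ≤ j < r`, `j ≡ s`. Writing `h' = t^{m'} g` with `t ∤ g`
gives `Φ(θ) = Φ(t^m g)` for `m = m' - ⌊s/r⌋`, and `s + r m = j + r m' ≥ 0`.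
-/

open MvPolynomial

theorem mul_algebraMap_mem_range_iff {A B : Type*} [CommSemiring A] [Semiring B] [Algebra A B]
    {v : A} (hv : IsUnit v) (x : B) :
    x * algebraMap A B v ∈ Set.range (algebraMap A B) ↔ x ∈ Set.range (algebraMap A B) := by
  constructor
  · rintro ⟨y, hy⟩
    refine ⟨y * ↑hv.unit⁻¹, ?_⟩
    rw [map_mul, hy, mul_assoc, ← map_mul, hv.mul_val_inv, map_one, mul_one]
  · rintro ⟨y, rfl⟩
    exact ⟨y * v, map_mul _ _ _⟩

namespace MvPolynomial

section CommSemiring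

variable {R σ : Type*} [CommSemiring R] (i : σ)

theorem monomial_eq_X_pow_mul_monomial_erase (d : σ →₀ ℕ) (a : R) :
    monomial d a = X i ^ d i * monomial (d.erase i) a := by
  rw [X_pow_eq_monomial, monomial_mul, one_mul, Finsupp.single_add_erase]

variable [DecidableEq σ]

noncomputable def expandVar (r : ℕ) : MvPolynomial σ R →ₐ[R] MvPolynomial σ R :=
  aeval (Function.update X i (X i ^ r))

noncomputable def scaleVar (c : R) : MvPolynomial σ R →ₐ[R] MvPolynomial σ R :=
  aeval (Function.update X i (C c * X i))

theorem aeval_update_X_monomial (v : MvPolynomial σ R) (d : σ →₀ ℕ) (a : R) :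
    aeval (Function.update X i v) (monomial d a) = v ^ d i * monomial (d.erase i) a := by
  rw [monomial_eq_X_pow_mul_monomial_erase i, map_mul, map_pow, aeval_X, Function.update_self,
    aeval_monomial, monomial_eq, algebraMap_eq]
  congr 2
  refine Finsupp.prod_congr fun j hj => ?_
  rw [Finsupp.support_erase] at hj
  rw [Function.update_of_ne (Finset.ne_of_mem_erase hj)]

theorem expandVar_monomial (r : ℕ) (d : σ →₀ ℕ) (a : R) :
    expandVar i r (monomial d a) = X i ^ (r * d i) * monomial (d.erase i) a := by
  rw [expandVar, aeval_update_X_monomial, pow_mul]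

@[simp]
theorem expandVar_X_self (r : ℕ) : expandVar i r (X i : MvPolynomial σ R) = X i ^ r := by
  rw [expandVar, aeval_X, Function.update_self]

@[simp]
theorem expandVar_X_of_ne (r : ℕ) {j : σ} (hj : j ≠ i) :
    expandVar i r (X j : MvPolynomial σ R) = X j := by
  rw [expandVar, aeval_X, Function.update_of_ne hj]

theorem scaleVar_monomial (c : R) (d : σ →₀ ℕ) (a : R) :
    scaleVar i c (monomial d a) = monomial d (c ^ d i * a) := by
  rw [scaleVar, aeval_update_X_monomial, mul_pow, ← C_pow, mul_assoc,
    ← monomial_eq_X_pow_mul_monomial_erase, C_mul_monomial]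

theorem coeff_scaleVar (c : R) (p : MvPolynomial σ R) (d : σ →₀ ℕ) :
    coeff d (scaleVar i c p) = c ^ d i * coeff d p := by
  classical
  induction p using MvPolynomial.induction_on' with
  | monomial d' a =>
    rw [scaleVar_monomial, coeff_monomial, coeff_monomial]
    split_ifs with h
    · rw [h]
    · rw [mul_zero]
  | add p q hp hq => rw [map_add, coeff_add, coeff_add, hp, hq, mul_add]

theorem scaleVar_comp_expandVar {c : R} {r : ℕ} (hc : c ^ r = 1) :
    (scaleVar i c).comp (expandVar i r) = expandVar i r := by
  refine algHom_ext fun j => ?_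
  obtain rfl | hj := eq_or_ne j i
  · rw [AlgHom.comp_apply, expandVar_X_self, map_pow, scaleVar, aeval_X, Function.update_self,
      mul_pow, ← C_pow, hc, C_1, one_mul]
  · rw [AlgHom.comp_apply, expandVar_X_of_ne i r hj, scaleVar, aeval_X, Function.update_of_ne hj]

theorem exists_eq_X_pow_mul_expandVar {r j : ℕ} (p : MvPolynomial σ R)
    (hp : ∀ d ∈ p.support, d i % r = j) : ∃ q, p = X i ^ j * expandVar i r q := by
  refine ⟨∑ d ∈ p.support, monomial (d.update i (d i / r)) (coeff d p), ?_⟩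
  rw [map_sum, Finset.mul_sum]
  conv_lhs => rw [← support_sum_monomial_coeff p]
  refine Finset.sum_congr rfl fun d hd => ?_
  rw [expandVar_monomial, Finsupp.erase_update_eq_erase, Finsupp.update_apply, if_pos rfl,
    ← mul_assoc, ← pow_add, ← hp d hd, Nat.mod_add_div, ← monomial_eq_X_pow_mul_monomial_erase]

end CommSemiring

section Field

variable {k σ : Type*} [Field k] [DecidableEq σ] (i : σ)

theorem scaleVar_injective {c : k} (hc : c ≠ 0) :
    Function.Injective (scaleVar i c : MvPolynomial σ k → MvPolynomial σ k) := by
  intro p q hpq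
  ext d
  have := congrArg (coeff d) hpq
  rwa [coeff_scaleVar, coeff_scaleVar, mul_right_inj' (pow_ne_zero _ hc)] at this

theorem exists_eq_X_pow_mul_expandVar_of_scaleVar_eq {ζ : k} {r : ℕ} (hζ : IsPrimitiveRoot ζ r)
    (hr : r ≠ 0) {p : MvPolynomial σ k} {s : ℤ} (hp : scaleVar i ζ p = C (ζ ^ s) * p) :
    ∃ q, p = X i ^ (s % r).toNat * expandVar i r q := by
  refine exists_eq_X_pow_mul_expandVar i p fun d hd => ?_
  have hcoeff := congrArg (coeff d) hp
  rw [coeff_scaleVar, coeff_C_mul, mul_left_inj' (mem_support_iff.mp hd)] at hcoeff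
  have hdvd : (r : ℤ) ∣ d i - s := by
    rw [← hζ.zpow_eq_one_iff_dvd, zpow_sub₀ (hζ.ne_zero hr), zpow_natCast, hcoeff,
      div_self (zpow_ne_zero _ (hζ.ne_zero hr))]
  have hmod : s % r = ((d i % r : ℕ) : ℤ) := by
    rw [Int.natCast_mod]
    exact Int.modEq_iff_dvd.mpr hdvd
  rw [hmod, Int.toNat_natCast]

end Field

section FractionField

variable {k σ K : Type*} [Field k] [Field K] [Algebra (MvPolynomial σ k) K] (i : σ)

local notation "ι" => algebraMap (MvPolynomial σ k) K

theorem X_zpow_mul_algebraMap_mem_range {e : ℤ} (he : 0 ≤ e) (g : MvPolynomial σ k) :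
    ι (X i) ^ e * ι g ∈ Set.range ι := by
  lift e to ℕ using he
  exact ⟨X i ^ e * g, by rw [map_mul, map_pow, zpow_natCast]⟩

variable [DecidableEq σ] {r : ℕ} {Φ : K →+* K}

theorem map_X_zpow_mul_algebraMap
    (hΦ : ∀ a, Φ (ι a) = ι (expandVar i r a)) (m : ℤ) (g : MvPolynomial σ k) :
    Φ (ι (X i) ^ m * ι g) = ι (X i) ^ (r * m) * ι (expandVar i r g) := by
  rw [map_mul, map_zpow₀, hΦ, hΦ, expandVar_X_self, map_pow, ← zpow_natCast, ← zpow_mul]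

variable [IsFractionRing (MvPolynomial σ k) K]

theorem scaleVar_eq_C_zpow_mul_of_algebraMap_eq {ζ : k} (hζ : IsPrimitiveRoot ζ r) (hr : r ≠ 0)
    (hΦ : ∀ a, Φ (ι a) = ι (expandVar i r a)) {θ : K} {s : ℤ} {p : MvPolynomial σ k}
    (hp : ι p = Φ θ * ι (X i) ^ s) :
    scaleVar i ζ p = C (ζ ^ s) * p := by
  let τ : K →+* K := IsFractionRing.lift (g := (ι).comp (scaleVar i ζ).toRingHom)
    ((IsFractionRing.injective _ K).comp (scaleVar_injective i (hζ.ne_zero hr)))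
  have hτ : ∀ a, τ (ι a) = ι (scaleVar i ζ a) := IsFractionRing.lift_algebraMap _
  have hτΦ : τ.comp Φ = Φ := IsLocalization.ringHom_ext (nonZeroDivisors (MvPolynomial σ k)) <|
    RingHom.ext fun a => by
      simp only [RingHom.comp_apply, hΦ, hτ]
      rw [← AlgHom.comp_apply, scaleVar_comp_expandVar i hζ.pow_eq_one]
  apply IsFractionRing.injective (MvPolynomial σ k) K
  calc ι (scaleVar i ζ p) = τ (Φ θ) * τ (ι (X i)) ^ s := by rw [← hτ, hp, map_mul, map_zpow₀]
    _ = ι (C ζ) ^ s * (Φ θ * ι (X i) ^ s) := by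
      rw [← RingHom.comp_apply τ Φ, hτΦ, hτ, scaleVar, aeval_X, Function.update_self, map_mul,
        mul_zpow]
      ring
    _ = ι (C (ζ ^ s) * p) := by
      rw [map_mul, ← hp]
      exact congrArg (· * ι p) (map_zpow₀ ((ι).comp C) ζ s).symm

theorem map_mul_X_zpow_mem_range_iff {ζ : k} (hζ : IsPrimitiveRoot ζ r) (hr : r ≠ 0)
    (hΦ : ∀ a, Φ (ι a) = ι (expandVar i r a)) {θ : K} (hθ : θ ≠ 0) (s : ℤ) :
    Φ θ * ι (X i) ^ s ∈ Set.range ι ↔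
      ∃ (m : ℤ) (g : MvPolynomial σ k), ¬ X i ∣ g ∧ θ = ι (X i) ^ m * ι g ∧ 0 ≤ s + r * m := by
  have ht : ι (X i) ≠ 0 := (map_ne_zero_iff _ (IsFractionRing.injective _ K)).2 (X_ne_zero i)
  constructor
  · rintro ⟨p, hp⟩
    obtain ⟨q, rfl⟩ := exists_eq_X_pow_mul_expandVar_of_scaleVar_eq i hζ hr
      (scaleVar_eq_C_zpow_mul_of_algebraMap_eq i hζ hr hΦ hp)
    have hq : q ≠ 0 := by
      rintro rfl
      rw [map_zero, mul_zero, map_zero, eq_comm, mul_eq_zero] at hp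
      exact hp.elim ((map_ne_zero Φ).2 hθ) (zpow_ne_zero s ht)
    obtain ⟨m, g, hg, rfl⟩ := WfDvdMonoid.max_power_factor hq (X_prime (i := i)).irreducible
    have hs := Int.emod_add_mul_ediv s r
    have hs0 : 0 ≤ s % r := Int.emod_nonneg s (by exact_mod_cast hr)
    have hexp : r * (m - s / r) + s = (s % r).toNat + r * m := by
      rw [Int.toNat_of_nonneg hs0]; linear_combination -hs
    refine ⟨m - s / r, g, hg, Φ.injective (mul_right_cancel₀ (zpow_ne_zero s ht) ?_), ?_⟩
    · rw [← hp, map_X_zpow_mul_algebraMap i hΦ, mul_right_comm, ← zpow_add₀ ht, hexp,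
        zpow_add₀ ht, zpow_natCast, zpow_mul, zpow_natCast, zpow_natCast]
      simp only [map_mul, map_pow, expandVar_X_self, mul_assoc]
    · rw [add_comm, hexp]
      positivity
  · rintro ⟨m, g, -, rfl, hm⟩
    rw [map_X_zpow_mul_algebraMap i hΦ, mul_right_comm, ← zpow_add₀ ht, add_comm]
    exact X_zpow_mul_algebraMap_mem_range i hm _

end FractionField

end MvPolynomial

theorem stmt8_general {k : Type*} [Field k] (n r : ℕ) (hr : 1 ≤ r)
    (ζ : k) (hζ : IsPrimitiveRoot ζ r) (j₀ : Fin n)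
    (ψ : MvPolynomial (Fin n) k →ₐ[k] MvPolynomial (Fin n) k)
    (hψ : ∀ i : Fin n, i ≠ j₀ → ψ (X i) = X i)
    (hψ' : ψ (X j₀) = X j₀ ^ r)
    (Φ : FractionRing (MvPolynomial (Fin n) k) →+*
      FractionRing (MvPolynomial (Fin n) k))
    (hΦ : ∀ a : MvPolynomial (Fin n) k,
      Φ (algebraMap (MvPolynomial (Fin n) k) (FractionRing (MvPolynomial (Fin n) k)) a) =
        algebraMap (MvPolynomial (Fin n) k) (FractionRing (MvPolynomial (Fin n) k)) (ψ a))
    (p' q' : ℕ) (θ : FractionRing (MvPolynomial (Fin n) k)) (hθ : θ ≠ 0) :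
    (Φ θ * (algebraMap (MvPolynomial (Fin n) k) (FractionRing (MvPolynomial (Fin n) k))
          (C (r : k) * X j₀ ^ (r - 1))) ^ ((q' : ℤ) - (p' : ℤ)) ∈
        Set.range (algebraMap (MvPolynomial (Fin n) k)
          (FractionRing (MvPolynomial (Fin n) k)))) ↔
      (∃ (m : ℤ) (g : MvPolynomial (Fin n) k), ¬ (X j₀ ∣ g) ∧
        θ = (algebraMap (MvPolynomial (Fin n) k) (FractionRing (MvPolynomial (Fin n) k)) (X j₀)) ^ m *
          algebraMap (MvPolynomial (Fin n) k) (FractionRing (MvPolynomial (Fin n) k)) g ∧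
        0 ≤ ((r : ℤ) - 1) * ((q' : ℤ) - (p' : ℤ)) + r * m) := by
  obtain rfl : ψ = expandVar j₀ r := algHom_ext fun i => by
    obtain rfl | hi := eq_or_ne i j₀
    · rw [hψ', expandVar_X_self]
    · rw [hψ i hi, expandVar_X_of_ne j₀ r hi]
  have hr0 : r ≠ 0 := Nat.one_le_iff_ne_zero.mp hr
  have hrk : (r : k) ≠ 0 := by
    have : NeZero r := ⟨hr0⟩
    exact hζ.neZero'.out
  set ι := algebraMap (MvPolynomial (Fin n) k) (FractionRing (MvPolynomial (Fin n) k))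
  have hfactor : ι (C (r : k) * X j₀ ^ (r - 1)) ^ ((q' : ℤ) - p') =
      ι (X j₀) ^ (((r : ℤ) - 1) * ((q' : ℤ) - p')) * ι (C ((r : k) ^ ((q' : ℤ) - p'))) := by
    rw [map_mul, mul_zpow, mul_comm, map_pow, ← zpow_natCast, ← zpow_mul, Nat.cast_sub hr,
      Nat.cast_one]
    exact congrArg _ (map_zpow₀ (ι.comp C) _ _).symm
  rw [hfactor, ← mul_assoc, mul_algebraMap_mem_range_iff
    ((isUnit_iff_ne_zero.2 (zpow_ne_zero _ hrk)).map C)]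
  exact map_mul_X_zpow_mem_range_iff j₀ hζ hr0 hΦ hθ _

/-- Theorem 3.8.1 expressed coefficientwise in the
étale-local cyclic model.  Let `A = k[X₁,…,Xₙ]` with fraction field `L`, and
let `Φ : L → L` be the field homomorphism induced by the injective `k`-algebra
endomorphism `ψ` of `A` with `ψ(Xᵢ) = Xᵢ` for `i ≠ j₀` and
`ψ(X_{j₀}) = X_{j₀}^r`.  For `p', q' ∈ ℕ` and `θ ∈ L` nonzero, the element
`Φ(θ) · (r · X_{j₀}^{r−1})^{q'−p'}` of `L` is a polynomial iff
`θ = X_{j₀}^m · g` with `g` a polynomial not divisible by `X_{j₀}` and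
`(r−1)(q'−p') + r·m ≥ 0`. -/
theorem stmt8 {k : Type*} [Field k] (n r : ℕ) (hn : 1 ≤ n) (hr : 1 ≤ r)
    (ζ : k) (hζ : IsPrimitiveRoot ζ r) (j₀ : Fin n)
    (ψ : MvPolynomial (Fin n) k →ₐ[k] MvPolynomial (Fin n) k)
    (hψ : ∀ i : Fin n, i ≠ j₀ → ψ (X i) = X i)
    (hψ' : ψ (X j₀) = X j₀ ^ r)
    (hψinj : Function.Injective ψ)
    (Φ : FractionRing (MvPolynomial (Fin n) k) →+*
      FractionRing (MvPolynomial (Fin n) k))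
    (hΦ : ∀ a : MvPolynomial (Fin n) k,
      Φ (algebraMap (MvPolynomial (Fin n) k) (FractionRing (MvPolynomial (Fin n) k)) a) =
        algebraMap (MvPolynomial (Fin n) k) (FractionRing (MvPolynomial (Fin n) k)) (ψ a))
    (p' q' : ℕ) (θ : FractionRing (MvPolynomial (Fin n) k)) (hθ : θ ≠ 0) :
    (Φ θ * (algebraMap (MvPolynomial (Fin n) k) (FractionRing (MvPolynomial (Fin n) k))
          (C (r : k) * X j₀ ^ (r - 1))) ^ ((q' : ℤ) - (p' : ℤ)) ∈
        Set.range (algebraMap (MvPolynomial (Fin n) k)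
          (FractionRing (MvPolynomial (Fin n) k)))) ↔
      (∃ (m : ℤ) (g : MvPolynomial (Fin n) k), ¬ (X j₀ ∣ g) ∧
        θ = (algebraMap (MvPolynomial (Fin n) k) (FractionRing (MvPolynomial (Fin n) k)) (X j₀)) ^ m *
          algebraMap (MvPolynomial (Fin n) k) (FractionRing (MvPolynomial (Fin n) k)) g ∧
        0 ≤ ((r : ℤ) - 1) * ((q' : ℤ) - (p' : ℤ)) + r * m) :=
  stmt8_general n r hr ζ hζ j₀ ψ hψ hψ' Φ hΦ p' q' θ hθ
end

section
/- Let k be a field, let n ≥ 1 and r ≥ 1 be integers, let ζ ∈ k be a primitive r-th root of unity, fix j₀ ∈ {1,…,n}, write A = k[X₁,…,Xₙ] with fraction field L = Frac(A), and let Φ : L → L be the field homomorphism induced by the injective k-algebra endomorphism of A sending X_i ↦ X_i for i ≠ j₀ and X_{j₀} ↦ X_{j₀}^r. Let p', q' be natural numbers with q' ≤ 1 and let θ ∈ L be nonzero. If Φ(θ) · ((r·1_k) · X_{j₀}^{r−1})^{q'−p'} lies in the image of A in L (the integer power q'−p' taken in the field L), then θ itself lies in the image of A in L. -/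
open MvPolynomial


open Polynomial in
private lemma stmt9_key {B : Type*} [CommRing B] [IsDomain B] {r s : ℕ} (hr : 0 < r) (hs : s < r)
    {a b P : B[X]} (heq : (expand B r a) * Polynomial.X ^ s = P * expand B r b) :
    b ∣ a := by
  classical
  set h : B[X] := ∑ j ∈ Finset.range (P.natDegree + 1),
    Polynomial.monomial j (P.coeff (r * j + s)) with hhdef
  have hcoeff : ∀ j, h.coeff j = P.coeff (r * j + s) := by
    intro j
    rw [hhdef, Polynomial.finset_sum_coeff]
    simp only [Polynomial.coeff_monomial]
    rw [Finset.sum_ite_eq' (Finset.range (P.natDegree + 1)) j fun i => P.coeff (r * i + s)]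
    split_ifs with hmem
    · rfl
    · symm
      apply Polynomial.coeff_eq_zero_of_natDegree_lt
      have h1 : ¬ j < P.natDegree + 1 := by simpa [Finset.mem_range] using hmem
      have h2 : j ≤ r * j := Nat.le_mul_of_pos_left j hr
      omega
  refine ⟨h, ?_⟩
  ext m
  have hLHS : ((expand B r a) * Polynomial.X ^ s).coeff (r * m + s) = a.coeff m := by
    rw [Polynomial.coeff_mul_X_pow', if_pos (Nat.le_add_left s (r * m)), Nat.add_sub_cancel,
      Polynomial.coeff_expand_mul' hr]
  have hRHS : (P * expand B r b).coeff (r * m + s)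
      = ∑ j ∈ Finset.range (m + 1), b.coeff j * h.coeff (m - j) := by
    rw [mul_comm P (expand B r b), Polynomial.coeff_mul,
      Finset.Nat.sum_antidiagonal_eq_sum_range_succ_mk]
    have step : ∀ x ∈ Finset.range (r * m + s + 1),
        (expand B r b).coeff x * P.coeff (r * m + s - x)
          = if r ∣ x then b.coeff (x / r) * P.coeff (r * m + s - x) else 0 := by
      intro x _
      rw [Polynomial.coeff_expand hr]
      split_ifs <;> simp
    rw [Finset.sum_congr rfl step, ← Finset.sum_filter]
    have himg : (Finset.range (r * m + s + 1)).filter (fun x => r ∣ x)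
        = (Finset.range (m + 1)).image (fun j => r * j) := by
      ext x
      simp only [Finset.mem_filter, Finset.mem_range, Finset.mem_image]
      constructor
      · rintro ⟨hx, j, rfl⟩
        refine ⟨j, ?_, rfl⟩
        have h1 : r * j < r * (m + 1) := by rw [Nat.mul_succ]; omega
        exact Nat.lt_of_mul_lt_mul_left h1
      · rintro ⟨j, hj, rfl⟩
        have h1 : r * j ≤ r * m := Nat.mul_le_mul_left r (by omega)
        exact ⟨by omega, j, rfl⟩
    rw [himg, Finset.sum_image (fun j _ j' _ hjj => Nat.eq_of_mul_eq_mul_left hr hjj)]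
    refine Finset.sum_congr rfl ?_
    intro j hj
    have hjm : j ≤ m := by simpa [Nat.lt_succ_iff] using hj
    obtain ⟨d, rfl⟩ : ∃ d, m = j + d := ⟨m - j, by omega⟩
    have e1 : r * j / r = j := Nat.mul_div_cancel_left j hr
    have e2 : r * (j + d) + s - r * j = r * d + s := by rw [Nat.mul_add]; omega
    have e3 : j + d - j = d := by omega
    rw [e1, e2, e3, hcoeff d]
  rw [Polynomial.coeff_mul, Finset.Nat.sum_antidiagonal_eq_sum_range_succ_mk]
  calc a.coeff m = ((expand B r a) * Polynomial.X ^ s).coeff (r * m + s) := hLHS.symm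
    _ = (P * expand B r b).coeff (r * m + s) := by rw [heq]
    _ = ∑ j ∈ Finset.range (m + 1), b.coeff j * h.coeff (m - j) := hRHS

private lemma stmt9_keyMv {k : Type*} [Field k] {n r : ℕ} (hr : 0 < r) (j₀ : Fin n)
    (ψ : MvPolynomial (Fin n) k →ₐ[k] MvPolynomial (Fin n) k)
    (hψ : ∀ i, i ≠ j₀ → ψ (X i) = X i) (hψ' : ψ (X j₀) = X j₀ ^ r)
    {s : ℕ} (hs : s < r) {a b P : MvPolynomial (Fin n) k}
    (heq : ψ a * X j₀ ^ s = P * ψ b) : b ∣ a := by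
  classical
  set S := {i : Fin n // i ≠ j₀} with hS
  set E : MvPolynomial (Fin n) k ≃ₐ[k] Polynomial (MvPolynomial S k) :=
    (renameEquiv k (Equiv.optionSubtypeNe j₀).symm).trans (optionEquivLeft k S) with hE
  have hEX : E (X j₀) = Polynomial.X := by
    simp [hE, renameEquiv_apply, rename_X, Equiv.optionSubtypeNe_symm_self,
      optionEquivLeft_X_none]
  have hEψ : ∀ f, E (ψ f) = Polynomial.expand (MvPolynomial S k) r (E f) := by
    have : (E.toAlgHom.comp ψ)
        = ((Polynomial.expand (MvPolynomial S k) r).restrictScalars k).comp E.toAlgHom := by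
      apply MvPolynomial.algHom_ext
      intro i
      by_cases hi : i = j₀
      · subst hi
        simp [hψ', map_pow, hEX, Polynomial.expand_X]
      · simp [hψ i hi, hE, renameEquiv_apply, rename_X, Equiv.optionSubtypeNe_symm_of_ne hi,
          optionEquivLeft_X_some, Polynomial.expand_C]
    intro f
    exact DFunLike.congr_fun this f
  have h2 : Polynomial.expand (MvPolynomial S k) r (E a) * Polynomial.X ^ s
      = (E P) * Polynomial.expand (MvPolynomial S k) r (E b) := by
    have := congrArg E heq
    rw [map_mul, map_mul, map_pow, hEX, hEψ, hEψ] at this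
    exact this
  obtain ⟨c, hc⟩ := stmt9_key hr hs h2
  refine ⟨E.symm c, ?_⟩
  apply E.injective
  rw [map_mul, hc, AlgEquiv.apply_symm_apply]


private lemma stmt9_cast_ne_zero {k : Type*} [Field k] {r : ℕ} (hr : 1 ≤ r)
    {ζ : k} (hζ : IsPrimitiveRoot ζ r) : (r : k) ≠ 0 := by
  intro h0
  set p := ringChar k with hp
  haveI : CharP k p := ringChar.charP k
  have hdvd : p ∣ r := (CharP.cast_eq_zero_iff k p r).mp h0
  have hp0 : p ≠ 0 := by
    rintro hzero
    rw [hzero] at hdvd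
    have := Nat.eq_zero_of_zero_dvd hdvd
    omega
  have hprime : p.Prime := (CharP.char_is_prime_or_zero k p).resolve_right hp0
  haveI : Fact p.Prime := ⟨hprime⟩
  obtain ⟨m, hm⟩ := hdvd
  have hm0 : 0 < m := by
    rcases Nat.eq_zero_or_pos m with h | h
    · subst h; simp at hm; omega
    · exact h
  have h1 : (ζ ^ m - 1) ^ p = 0 := by
    rw [sub_pow_char, ← pow_mul, one_pow, mul_comm m p, ← hm, hζ.pow_eq_one, sub_self]
  have h2 : ζ ^ m = 1 := by
    have := pow_eq_zero_iff hp0 |>.mp h1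
    exact sub_eq_zero.mp this
  have hrm : r ∣ m := (hζ.pow_eq_one_iff_dvd m).mp h2
  have hle : r ≤ m := Nat.le_of_dvd hm0 hrm
  have hlt : m < r := by
    rw [hm]
    have h2le : 2 ≤ p := hprime.two_le
    calc m < 2 * m := by omega
      _ ≤ p * m := Nat.mul_le_mul_right m h2le
  omega

/-- Corollary 4.2.1 expressed coefficientwise in the
étale-local cyclic model.  With `A = k[X₁,…,Xₙ]`, `L = Frac(A)` and
`Φ : L → L` the field homomorphism induced by `Xᵢ ↦ Xᵢ` (`i ≠ j₀`),
`X_{j₀} ↦ X_{j₀}^r`: if `q' ≤ 1` and `θ ∈ L` is nonzero and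
`Φ(θ) · (r · X_{j₀}^{r−1})^{q'−p'}` is a polynomial, then `θ` is itself a
polynomial. -/
theorem stmt9 {k : Type*} [Field k] (n r : ℕ) (hn : 1 ≤ n) (hr : 1 ≤ r)
    (ζ : k) (hζ : IsPrimitiveRoot ζ r) (j₀ : Fin n)
    (ψ : MvPolynomial (Fin n) k →ₐ[k] MvPolynomial (Fin n) k)
    (hψ : ∀ i : Fin n, i ≠ j₀ → ψ (X i) = X i)
    (hψ' : ψ (X j₀) = X j₀ ^ r)
    (hψinj : Function.Injective ψ)
    (Φ : FractionRing (MvPolynomial (Fin n) k) →+*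
      FractionRing (MvPolynomial (Fin n) k))
    (hΦ : ∀ a : MvPolynomial (Fin n) k,
      Φ (algebraMap (MvPolynomial (Fin n) k) (FractionRing (MvPolynomial (Fin n) k)) a) =
        algebraMap (MvPolynomial (Fin n) k) (FractionRing (MvPolynomial (Fin n) k)) (ψ a))
    (p' q' : ℕ) (hq' : q' ≤ 1)
    (θ : FractionRing (MvPolynomial (Fin n) k)) (hθ : θ ≠ 0)
    (hreg : Φ θ * (algebraMap (MvPolynomial (Fin n) k)
          (FractionRing (MvPolynomial (Fin n) k))
          (C (r : k) * X j₀ ^ (r - 1))) ^ ((q' : ℤ) - (p' : ℤ)) ∈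
        Set.range (algebraMap (MvPolynomial (Fin n) k)
          (FractionRing (MvPolynomial (Fin n) k)))) :
    θ ∈ Set.range (algebraMap (MvPolynomial (Fin n) k)
      (FractionRing (MvPolynomial (Fin n) k))) := by
  classical
  have hrpos : 0 < r := hr
  have hr0 : (r : k) ≠ 0 := stmt9_cast_ne_zero hr hζ
  set alg : MvPolynomial (Fin n) k →+*
      FractionRing (MvPolynomial (Fin n) k) :=
    (algebraMap (MvPolynomial (Fin n) k) (FractionRing (MvPolynomial (Fin n) k)))
    with halgdef
  have hinj : Function.Injective alg :=
    IsFractionRing.injective (MvPolynomial (Fin n) k) (FractionRing (MvPolynomial (Fin n) k))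
  have hmapne : ∀ {x : MvPolynomial (Fin n) k}, x ≠ 0 → alg x ≠ 0 := fun {x} hx =>
    (map_ne_zero_iff alg hinj).mpr hx
  obtain ⟨a, b, hbmem, hab⟩ :=
    IsFractionRing.div_surjective (A := MvPolynomial (Fin n) k) θ
  have hbne : b ≠ 0 := nonZeroDivisors.ne_zero hbmem
  have hψbne : ψ b ≠ 0 := fun h0 => hbne (hψinj (by simpa using h0))
  have halgψb : alg (ψ b) ≠ 0 := hmapne hψbne
  have hΦθ : Φ θ = alg (ψ a) / alg (ψ b) := by
    rw [← hab, map_div₀, hΦ, hΦ]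
  have hC0 : C (r : k) ≠ (0 : MvPolynomial (Fin n) k) := fun h =>
    hr0 (by simpa using (MvPolynomial.C_injective (Fin n) k) (h.trans (map_zero C).symm))
  have hc0 : C (r : k) * X j₀ ^ (r - 1) ≠ (0 : MvPolynomial (Fin n) k) :=
    mul_ne_zero hC0 (pow_ne_zero _ (MvPolynomial.X_ne_zero j₀))
  have hc0F : alg (C (r : k) * X j₀ ^ (r - 1)) ≠ 0 := hmapne hc0
  obtain ⟨f, hf⟩ := hreg
  rcases le_or_gt (q' : ℤ) (p' : ℤ) with hle | hlt
  · -- q' ≤ p' : exponent is -(p'-q')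
    have ht : (q' : ℤ) - (p' : ℤ) = -((p' - q' : ℕ) : ℤ) := by omega
    rw [ht, zpow_neg, zpow_natCast, ← div_eq_mul_inv] at hf
    have hf' : Φ θ = alg f * (alg (C (r : k) * X j₀ ^ (r - 1))) ^ (p' - q') := by
      have h1 := hf.symm
      rw [div_eq_iff (pow_ne_zero _ hc0F)] at h1
      exact h1
    rw [hΦθ, div_eq_iff halgψb] at hf'
    have hup : ψ a = f * (C (r : k) * X j₀ ^ (r - 1)) ^ (p' - q') * ψ b := by
      apply hinj
      rw [map_mul, map_mul, map_pow]
      exact hf'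
    have heq : ψ a * X j₀ ^ 0
        = (f * (C (r : k) * X j₀ ^ (r - 1)) ^ (p' - q')) * ψ b := by
      rw [pow_zero, mul_one]; exact hup
    obtain ⟨c, hc⟩ := stmt9_keyMv hrpos j₀ ψ hψ hψ' hrpos heq
    refine ⟨c, ?_⟩
    have h2 : alg c * alg b = alg a := by rw [← map_mul, mul_comm c b, ← hc]
    rw [← hab, ← h2, mul_div_assoc, div_self (hmapne hbne), mul_one]
  · -- q' = 1, p' = 0
    have ht : (q' : ℤ) - (p' : ℤ) = 1 := by omega
    rw [ht, zpow_one, hΦθ, div_mul_eq_mul_div, eq_comm, div_eq_iff halgψb] at hf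
    have hup : ψ a * (C (r : k) * X j₀ ^ (r - 1)) = f * ψ b := by
      exact hinj (by simpa only [map_mul] using hf)
    have heq : ψ (C (r : k) * a) * X j₀ ^ (r - 1) = f * ψ b := by
      have hψC : ψ (C (r : k)) = C (r : k) := by
        rw [← MvPolynomial.algebraMap_eq]; exact ψ.commutes _
      rw [map_mul, hψC, ← hup]; ring
    have hs : r - 1 < r := by omega
    obtain ⟨c, hc⟩ := stmt9_keyMv hrpos j₀ ψ hψ hψ' hs heq
    refine ⟨C (r : k)⁻¹ * c, ?_⟩
    have hac : a = C (r : k)⁻¹ * c * b := by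
      calc a = C ((r : k)⁻¹ * (r : k)) * a := by
              rw [inv_mul_cancel₀ hr0, map_one, one_mul]
        _ = C (r : k)⁻¹ * (C (r : k) * a) := by rw [map_mul, mul_assoc]
        _ = C (r : k)⁻¹ * (b * c) := by rw [hc]
        _ = C (r : k)⁻¹ * c * b := by ring
    have h2 : alg (C (r : k)⁻¹ * c) * alg b = alg a := by rw [← map_mul, ← hac]
    rw [← hab, ← h2, mul_div_assoc, div_self (hmapne hbne), mul_one]
end
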